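/- Let n ≥ 2, ξ ∈ ℝⁿ with |ξ'|² − ξ_j² > 0 for some j ∈ {1,…,n−1} (so in particular ξ' ≠ 0). Define μ₁ := −(ξ_n/|ξ|) e(1) + (|ξ'|/|ξ|) e_n, μ₂ := (|ξ'|² − ξ_j²)^{−1/2} (ξ_j e(1) − |ξ'| e_j), α := ξ_j |ξ| / |ξ'| and β := (ξ_n/|ξ'|)(|ξ'|² − ξ_j²)^{1/2}. Then μ₁ and μ₂ are unit vectors, ξ·μ₁ = ξ·μ₂ = μ₁·μ₂ = 0, the last coordinate of μ₂ is zero, and ξ_j e_n − ξ_n e_j = α μ₁ + β μ₂. -/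

import Mathlib

open MeasureTheory Filter Complex
open scoped ENNReal RealInnerProductSpace

noncomputable section

/-- The last index of `Fin n` (i.e. the `n`-th coordinate). -/
def lastIdx (n : ℕ) (hn : 0 < n) : Fin n := ⟨n - 1, Nat.sub_lt hn one_pos⟩

/-- `|ξ'|`, the Euclidean norm of the first `n-1` coordinates of `ξ`. -/
def xiPrimeNorm (n : ℕ) (ξ : EuclideanSpace ℝ (Fin n)) : ℝ :=
  Real.sqrt (∑ i ∈ Finset.univ.filter (fun i : Fin n => (i : ℕ) < n - 1), ξ i ^ 2)

/-- `e(1) := (ξ'/|ξ'|, 0)`. -/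
def eOneVec (n : ℕ) (ξ : EuclideanSpace ℝ (Fin n)) : EuclideanSpace ℝ (Fin n) :=
  WithLp.toLp 2 fun i => if (i : ℕ) < n - 1 then ξ i / xiPrimeNorm n ξ else 0

/-- `μ₁ := -(ξ_n/|ξ|) e(1) + (|ξ'|/|ξ|) e_n`. -/
def muOneVec (n : ℕ) (hn : 0 < n) (ξ : EuclideanSpace ℝ (Fin n)) :
    EuclideanSpace ℝ (Fin n) :=
  (-(ξ (lastIdx n hn) / ‖ξ‖)) • eOneVec n ξ +
    (xiPrimeNorm n ξ / ‖ξ‖) • EuclideanSpace.single (lastIdx n hn) (1 : ℝ)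

/-!
With `u := e(1)`, `w := e_n` and `v := e_j` we have `ξ = |ξ'| u + ξ_n w`, where `u, w` are
orthonormal, `v ⊥ w` and `|ξ'| ⟪u, v⟫ = ξ_j`. Then `μ₁` normalises `|ξ'| w - ξ_n u`, the rotation
of `ξ` by a right angle in the plane of `u` and `w`, and `μ₂` normalises `ξ_j u - |ξ'| v`, which is
`-|ξ'|` times the component of `v` orthogonal to `u`; it is orthogonal to `u` and `w`, hence to `ξ`
and `μ₁`. All claims are therefore identities in an arbitrary real inner product space.
-/

section PlaneFrame

variable {E : Type*} [NormedAddCommGroup E] [InnerProductSpace ℝ E] {u v w : E}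

theorem norm_smul_add_smul_sq_of_orthonormal (hu : ‖u‖ = 1) (hw : ‖w‖ = 1) (huw : ⟪u, w⟫ = 0)
    (b c : ℝ) : ‖b • u + c • w‖ ^ 2 = b ^ 2 + c ^ 2 := by
  rw [norm_add_sq_real, real_inner_smul_left, real_inner_smul_right, huw, norm_smul, norm_smul,
    hu, hw, Real.norm_eq_abs, Real.norm_eq_abs]
  simp only [mul_one, mul_zero, sq_abs, add_zero]

theorem norm_smul_sub_smul_eq_norm_smul_add_smul (hu : ‖u‖ = 1) (hw : ‖w‖ = 1)
    (huw : ⟪u, w⟫ = 0) (p t : ℝ) : ‖p • w - t • u‖ = ‖p • u + t • w‖ := by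
  have hrot : p • w - t • u = (-t) • u + p • w := by module
  rw [← sq_eq_sq₀ (norm_nonneg _) (norm_nonneg _), hrot,
    norm_smul_add_smul_sq_of_orthonormal hu hw huw, norm_smul_add_smul_sq_of_orthonormal hu hw huw]
  ring

theorem inner_smul_add_smul_smul_sub_smul (hu : ‖u‖ = 1) (hw : ‖w‖ = 1) (huw : ⟪u, w⟫ = 0)
    (p t : ℝ) : ⟪p • u + t • w, p • w - t • u⟫ = 0 := by
  simp only [inner_add_left, inner_sub_right, real_inner_smul_left, real_inner_smul_right,
    real_inner_self_eq_norm_sq, real_inner_comm u w, hu, hw, huw]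
  ring

theorem norm_smul_sub_smul_sq (hu : ‖u‖ = 1) (hv : ‖v‖ = 1) {p a : ℝ} (hav : p * ⟪u, v⟫ = a) :
    ‖a • u - p • v‖ ^ 2 = p ^ 2 - a ^ 2 := by
  rw [norm_sub_sq_real, real_inner_smul_left, real_inner_smul_right, norm_smul, norm_smul,
    hu, hv, Real.norm_eq_abs, Real.norm_eq_abs, mul_one, mul_one, sq_abs, sq_abs]
  linear_combination (-2 * a) * hav

theorem inner_smul_add_smul_smul_sub_smul_of_inner_eq (hu : ‖u‖ = 1) (hvw : ⟪v, w⟫ = 0)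
    (huw : ⟪u, w⟫ = 0) {p a : ℝ} (hav : p * ⟪u, v⟫ = a) (t : ℝ) :
    ⟪p • u + t • w, a • u - p • v⟫ = 0 := by
  simp only [inner_add_left, inner_sub_right, real_inner_smul_left, real_inner_smul_right,
    real_inner_self_eq_norm_sq, real_inner_comm u w, real_inner_comm v w, hu, huw, hvw]
  linear_combination (-p) * hav

theorem inner_smul_sub_smul_smul_sub_smul (hu : ‖u‖ = 1) (hvw : ⟪v, w⟫ = 0) (huw : ⟪u, w⟫ = 0)
    {p a : ℝ} (hav : p * ⟪u, v⟫ = a) (t : ℝ) : ⟪p • w - t • u, a • u - p • v⟫ = 0 := by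
  simp only [inner_sub_left, inner_sub_right, real_inner_smul_left, real_inner_smul_right,
    real_inner_self_eq_norm_sq, real_inner_comm u w, real_inner_comm v w, hu, huw, hvw]
  linear_combination t * hav

theorem inner_smul_sub_smul_of_orthogonal (hvw : ⟪v, w⟫ = 0) (huw : ⟪u, w⟫ = 0) (a p : ℝ) :
    ⟪a • u - p • v, w⟫ = 0 := by
  simp only [inner_sub_left, real_inner_smul_left, huw, hvw, mul_zero, sub_zero]

theorem unit_orthogonal_frame_decomposition (hu : ‖u‖ = 1) (hv : ‖v‖ = 1) (hw : ‖w‖ = 1)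
    (huw : ⟪u, w⟫ = 0) (hvw : ⟪v, w⟫ = 0) {p t a : ℝ} (hav : p * ⟪u, v⟫ = a)
    (ha : 0 < p ^ 2 - a ^ 2) {x μ₁ μ₂ : E} (hx : p • u + t • w = x)
    (hμ₁ : μ₁ = ‖x‖⁻¹ • (p • w - t • u)) (hμ₂ : μ₂ = (√(p ^ 2 - a ^ 2))⁻¹ • (a • u - p • v)) :
    ‖μ₁‖ = 1 ∧ ‖μ₂‖ = 1 ∧ ⟪x, μ₁⟫ = 0 ∧ ⟪x, μ₂⟫ = 0 ∧ ⟪μ₁, μ₂⟫ = 0 ∧ ⟪μ₂, w⟫ = 0 ∧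
      a • w - t • v = (a * ‖x‖ / p) • μ₁ + (t / p * √(p ^ 2 - a ^ 2)) • μ₂ := by
  have hp : p ≠ 0 := by
    rintro rfl
    nlinarith [sq_nonneg a]
  have hx0 : ‖x‖ ≠ 0 := by
    have hsq := norm_smul_add_smul_sq_of_orthonormal hu hw huw p t
    rw [hx] at hsq
    nlinarith [sq_nonneg t, sq_pos_of_ne_zero hp]
  have hs0 : √(p ^ 2 - a ^ 2) ≠ 0 := (Real.sqrt_pos.2 ha).ne'
  have hx_eq : ‖x‖ = ‖p • w - t • u‖ := by
    rw [norm_smul_sub_smul_eq_norm_smul_add_smul hu hw huw, hx]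
  have hs_eq : √(p ^ 2 - a ^ 2) = ‖a • u - p • v‖ := by
    rw [← Real.sqrt_sq (norm_nonneg (a • u - p • v)), norm_smul_sub_smul_sq hu hv hav]
  have hxμ₁ := inner_smul_add_smul_smul_sub_smul hu hw huw p t
  have hxμ₂ := inner_smul_add_smul_smul_sub_smul_of_inner_eq hu hvw huw hav t
  rw [hx] at hxμ₁ hxμ₂
  subst hμ₁ hμ₂
  refine ⟨?_, ?_, ?_, ?_, ?_, ?_, ?_⟩
  · rw [hx_eq]
    exact norm_smul_inv_norm (𝕜 := ℝ) (norm_ne_zero_iff.1 (hx_eq ▸ hx0))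
  · rw [hs_eq]
    exact norm_smul_inv_norm (𝕜 := ℝ) (norm_ne_zero_iff.1 (hs_eq ▸ hs0))
  · rw [real_inner_smul_right, hxμ₁, mul_zero]
  · rw [real_inner_smul_right, hxμ₂, mul_zero]
  · rw [real_inner_smul_left, real_inner_smul_right,
      inner_smul_sub_smul_smul_sub_smul hu hvw huw hav, mul_zero, mul_zero]
  · rw [real_inner_smul_left, inner_smul_sub_smul_of_orthogonal hvw huw, mul_zero]
  · match_scalars <;> field_simp
    ring

end PlaneFrame

section Coordinates

variable {n : ℕ}

/-- `ξ'` padded with a zero last coordinate, so that `e(1) = ξ' / |ξ'|`. -/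
def xiPrime (n : ℕ) (ξ : EuclideanSpace ℝ (Fin n)) : EuclideanSpace ℝ (Fin n) :=
  WithLp.toLp 2 fun i => if (i : ℕ) < n - 1 then ξ i else 0

theorem xiPrimeNorm_eq_norm_xiPrime (ξ : EuclideanSpace ℝ (Fin n)) :
    xiPrimeNorm n ξ = ‖xiPrime n ξ‖ := by
  rw [xiPrimeNorm, EuclideanSpace.norm_eq, Finset.sum_filter]
  congr 1
  refine Finset.sum_congr rfl fun i _ => ?_
  split_ifs with h <;> simp [xiPrime, h]

theorem eOneVec_eq_inv_smul_xiPrime (ξ : EuclideanSpace ℝ (Fin n)) :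
    eOneVec n ξ = (xiPrimeNorm n ξ)⁻¹ • xiPrime n ξ := by
  ext i
  by_cases h : (i : ℕ) < n - 1 <;> simp [eOneVec, xiPrime, h, div_eq_inv_mul]

theorem norm_eOneVec {ξ : EuclideanSpace ℝ (Fin n)} (hξ : xiPrimeNorm n ξ ≠ 0) :
    ‖eOneVec n ξ‖ = 1 := by
  rw [eOneVec_eq_inv_smul_xiPrime, xiPrimeNorm_eq_norm_xiPrime]
  rw [xiPrimeNorm_eq_norm_xiPrime, norm_ne_zero_iff] at hξ
  exact norm_smul_inv_norm (𝕜 := ℝ) hξ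

theorem lastIdx_ne_of_lt (hn : 0 < n) {j : Fin n} (hj : (j : ℕ) < n - 1) : j ≠ lastIdx n hn :=
  fun h => by simp [h, lastIdx] at hj

theorem inner_eOneVec_single_lastIdx (hn : 0 < n) (ξ : EuclideanSpace ℝ (Fin n)) :
    ⟪eOneVec n ξ, EuclideanSpace.single (lastIdx n hn) (1 : ℝ)⟫ = 0 := by
  simp [EuclideanSpace.inner_single_right, eOneVec, lastIdx]

theorem xiPrimeNorm_mul_inner_eOneVec_single {ξ : EuclideanSpace ℝ (Fin n)}
    (hξ : xiPrimeNorm n ξ ≠ 0) {j : Fin n} (hj : (j : ℕ) < n - 1) :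
    xiPrimeNorm n ξ * ⟪eOneVec n ξ, EuclideanSpace.single j (1 : ℝ)⟫ = ξ j := by
  simp [EuclideanSpace.inner_single_right, eOneVec, hj, mul_div_cancel₀ _ hξ]

theorem xiPrime_add_single_lastIdx (hn : 0 < n) (ξ : EuclideanSpace ℝ (Fin n)) :
    xiPrime n ξ + ξ (lastIdx n hn) • EuclideanSpace.single (lastIdx n hn) (1 : ℝ) = ξ := by
  ext i
  by_cases h : (i : ℕ) < n - 1
  · have hi : i ≠ lastIdx n hn := fun hi => by simp [hi, lastIdx] at h
    simp [xiPrime, h, hi]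
  · have hi : i = lastIdx n hn := Fin.ext (by simp [lastIdx]; omega)
    subst hi
    simp [xiPrime, h]

theorem smul_eOneVec_add_single_lastIdx (hn : 0 < n) {ξ : EuclideanSpace ℝ (Fin n)}
    (hξ : xiPrimeNorm n ξ ≠ 0) :
    xiPrimeNorm n ξ • eOneVec n ξ +
      ξ (lastIdx n hn) • EuclideanSpace.single (lastIdx n hn) (1 : ℝ) = ξ := by
  rw [eOneVec_eq_inv_smul_xiPrime, smul_inv_smul₀ hξ, xiPrime_add_single_lastIdx]

theorem muOneVec_eq_inv_norm_smul (hn : 0 < n) (ξ : EuclideanSpace ℝ (Fin n)) :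
    muOneVec n hn ξ = ‖ξ‖⁻¹ • (xiPrimeNorm n ξ • EuclideanSpace.single (lastIdx n hn) (1 : ℝ) -
      ξ (lastIdx n hn) • eOneVec n ξ) := by
  rw [muOneVec]
  module

end Coordinates

theorem stmt2 (n : ℕ) (hn : 2 ≤ n) (ξ : EuclideanSpace ℝ (Fin n))
    (j : Fin n) (hj : (j : ℕ) < n - 1)
    (hpos : 0 < xiPrimeNorm n ξ ^ 2 - ξ j ^ 2)
    (μ₁ μ₂ : EuclideanSpace ℝ (Fin n)) (α β : ℝ)
    (hμ₁ : μ₁ = muOneVec n (by omega) ξ)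
    (hμ₂ : μ₂ = (Real.sqrt (xiPrimeNorm n ξ ^ 2 - ξ j ^ 2))⁻¹ •
      (ξ j • eOneVec n ξ - xiPrimeNorm n ξ • EuclideanSpace.single j (1 : ℝ)))
    (hα : α = ξ j * ‖ξ‖ / xiPrimeNorm n ξ)
    (hβ : β = ξ (lastIdx n (by omega)) / xiPrimeNorm n ξ *
      Real.sqrt (xiPrimeNorm n ξ ^ 2 - ξ j ^ 2)) :
    ‖μ₁‖ = 1 ∧ ‖μ₂‖ = 1 ∧
    ⟪ξ, μ₁⟫ = 0 ∧ ⟪ξ, μ₂⟫ = 0 ∧ ⟪μ₁, μ₂⟫ = 0 ∧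
    μ₂ (lastIdx n (by omega)) = 0 ∧
    ξ j • EuclideanSpace.single (lastIdx n (by omega)) (1 : ℝ) -
        ξ (lastIdx n (by omega)) • EuclideanSpace.single j (1 : ℝ) =
      α • μ₁ + β • μ₂ := by
  set L := lastIdx n (by omega)
  set p := xiPrimeNorm n ξ
  have hp : p ≠ 0 := by
    intro h
    rw [h] at hpos
    nlinarith [sq_nonneg (ξ j)]
  obtain ⟨hμ₁_norm, hμ₂_norm, hξμ₁, hξμ₂, hμ₁μ₂, hμ₂_last, hdecomp⟩ :=
    unit_orthogonal_frame_decomposition (norm_eOneVec hp)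
      (EuclideanSpace.orthonormal_single.1 j) (EuclideanSpace.orthonormal_single.1 L)
      (inner_eOneVec_single_lastIdx _ ξ)
      (EuclideanSpace.orthonormal_single.2 (lastIdx_ne_of_lt _ hj))
      (xiPrimeNorm_mul_inner_eOneVec_single hp hj) hpos (smul_eOneVec_add_single_lastIdx _ hp)
      (hμ₁.trans (muOneVec_eq_inv_norm_smul _ ξ)) hμ₂
  have hμ₂_apply : μ₂ L = ⟪μ₂, EuclideanSpace.single L (1 : ℝ)⟫ := by
    simp [EuclideanSpace.inner_single_right]
  exact ⟨hμ₁_norm, hμ₂_norm, hξμ₁, hξμ₂, hμ₁μ₂, hμ₂_apply.trans hμ₂_last, by rw [hdecomp, hα, hβ]⟩
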